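/- For all nonempty languages K and L, blim (K·L) = blim K ∪ K·(blim L), where K·L = {u ++ v | u ∈ K, v ∈ L} is the concatenation of languages. -/

import Mathlib

variable {α : Type*} [Fintype α] [LinearOrder α] [Nonempty α]

/-- `w↾n`, the length-`n` prefix of the ω-word `w`. -/
def restrict (w : ℕ → α) (n : ℕ) : List α := List.ofFn (fun i : Fin n => w i)

/-- `w` is a limit of `L`: every finite prefix of `w` is a proper prefix of some word of `L`. -/
def blim (L : Set (List α)) : Set (ℕ → α) :=
  {w | ∀ n : ℕ, ∃ u ∈ L, restrict w n <+: u ∧ restrict w n ≠ u}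

/-- `u <_ℓ w` for a word `u` and an ω-word `w`. -/
def wordLtOmega (u : List α) (w : ℕ → α) : Prop :=
  u = restrict w u.length ∨
    ∃ (i : ℕ) (h : i < u.length), u.take i = restrict w i ∧ u.get ⟨i, h⟩ < w i

/-- `w <_ℓ u` for an ω-word `w` and a word `u`. -/
def omegaLtWord (w : ℕ → α) (u : List α) : Prop :=
  ∃ (i : ℕ) (h : i < u.length), u.take i = restrict w i ∧ w i < u.get ⟨i, h⟩

/-- `w <_ℓ w'` for ω-words. -/
def omegaLt (w w' : ℕ → α) : Prop :=
  ∃ n : ℕ, (∀ i < n, w i = w' i) ∧ w n < w' n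

/-- `w ≤_ℓ w'` for ω-words. -/
def omegaLe (w w' : ℕ → α) : Prop := w = w' ∨ omegaLt w w'

/-- Concatenation `u·w` of a finite word and an ω-word. -/
def ocat (u : List α) (w : ℕ → α) : ℕ → α :=
  fun i => if h : i < u.length then u.get ⟨i, h⟩ else w (i - u.length)

/-- The strict order `u <_s v` on words. -/
def strictLt (u v : List α) : Prop :=
  ∃ (x y z : List α) (a b : α), a < b ∧ u = x ++ a :: y ∧ v = x ++ b :: z

/-- `v^ω` for a nonempty word `v`. -/
def wpow (v : List α) (hv : v ≠ []) : ℕ → α :=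
  fun i => v.get ⟨i % v.length, Nat.mod_lt _ (List.length_pos_iff.mpr hv)⟩

/-- `u^n`, the `n`-fold concatenation of the word `u` with itself. -/
def npow (u : List α) (n : ℕ) : List α := (List.replicate n u).flatten


lemma restrict_length (w : ℕ → α) (n : ℕ) : (restrict w n).length = n := by
  simp [restrict]

lemma restrict_add (w : ℕ → α) (m k : ℕ) :
    restrict w (m + k) = restrict w m ++ restrict (fun i => w (m + i)) k := by
  unfold restrict
  rw [List.ofFn_add]
  congr 1

lemma restrict_prefix (w : ℕ → α) {m n : ℕ} (h : m ≤ n) :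
    restrict w m <+: restrict w n := by
  obtain ⟨k, rfl⟩ := Nat.exists_eq_add_of_le h
  rw [restrict_add]
  exact List.prefix_append _ _

lemma restrict_ocat (u : List α) (w : ℕ → α) (k : ℕ) :
    restrict (ocat u w) (u.length + k) = u ++ restrict w k := by
  rw [restrict_add]
  congr 1
  · apply List.ext_get (by simp [restrict])
    intro i h1 h2
    simp only [restrict, List.get_ofFn, ocat]
    rw [dif_pos]
    · simp
    · simpa [restrict] using h2
  · unfold restrict
    congr 1
    funext i
    simp [ocat]

lemma ocat_restrict (x : ℕ → α) (l : ℕ) :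
    ocat (restrict x l) (fun i => x (l + i)) = x := by
  funext i
  unfold ocat
  by_cases h : i < (restrict x l).length
  · rw [dif_pos h]
    simp [restrict]
  · rw [dif_neg h]
    simp only [restrict_length] at h ⊢
    congr 1
    omega

lemma lt_of_proper {l₁ l₂ : List α} (h : l₁ <+: l₂) (hne : l₁ ≠ l₂) :
    l₁.length < l₂.length :=
  lt_of_le_of_ne h.length_le (fun he => hne (h.eq_of_length he))

/-- limits of a concatenation of nonempty languages. -/
theorem stmt6 (K L : Set (List α)) (hK : K.Nonempty) (hL : L.Nonempty) :
    blim {w : List α | ∃ u ∈ K, ∃ v ∈ L, w = u ++ v} =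
      blim K ∪ {x : ℕ → α | ∃ u ∈ K, ∃ w ∈ blim L, x = ocat u w} := by
  ext x
  simp only [Set.mem_union, Set.mem_setOf_eq]
  constructor
  · intro hx
    by_cases hbK : x ∈ blim K
    · exact Or.inl hbK
    · right
      simp only [blim, Set.mem_setOf_eq, not_forall] at hbK
      obtain ⟨n₀, hn₀⟩ := hbK
      push_neg at hn₀
      choose t ht hpre hne using hx
      choose u hu v hv heq using ht
      have hut : ∀ n, u n <+: t n := fun n => (heq n) ▸ List.prefix_append _ _
      have hlen : ∀ n, n₀ ≤ n → (u n).length ≤ n₀ := by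
        intro n hn
        by_contra h
        push_neg at h
        have h1 : restrict x n₀ <+: t n := (restrict_prefix x hn).trans (hpre n)
        have h3 : restrict x n₀ <+: u n := by
          rcases List.prefix_or_prefix_of_prefix h1 (hut n) with h' | h'
          · exact h'
          · exact absurd h'.length_le (by rw [restrict_length]; omega)
        have heq' := hn₀ (u n) (hu n) h3
        have := congrArg List.length heq'
        rw [restrict_length] at this
        omega
      have hueq : ∀ n, n₀ ≤ n → u n = restrict x (u n).length := by
        intro n hn
        have hun : u n <+: restrict x n := by
          rcases List.prefix_or_prefix_of_prefix (hut n) (hpre n) with h' | h'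
          · exact h'
          · have hle := h'.length_le
            rw [restrict_length] at hle
            have hl2 := hlen n hn
            rw [h'.eq_of_length (by rw [restrict_length]; omega)]
        have hr : restrict x (u n).length <+: restrict x n :=
          restrict_prefix x (le_trans (hlen n hn) hn)
        rcases List.prefix_or_prefix_of_prefix hun hr with h' | h'
        · exact h'.eq_of_length (by rw [restrict_length])
        · exact (h'.eq_of_length (by rw [restrict_length])).symm
      have hfin : ∃ l, l ≤ n₀ ∧ {n | n₀ ≤ n ∧ (u n).length = l}.Infinite := by
        by_contra h
        push_neg at h
        have hsub : (Set.Ici n₀ : Set ℕ) ⊆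
            ⋃ l ∈ Finset.range (n₀ + 1), {n | n₀ ≤ n ∧ (u n).length = l} := by
          intro n hn
          rw [Set.mem_Ici] at hn
          simp only [Set.mem_iUnion, Finset.mem_range, Set.mem_setOf_eq]
          exact ⟨(u n).length, by have := hlen n hn; omega, hn, rfl⟩
        have hfin2 : (⋃ l ∈ Finset.range (n₀ + 1),
            {n | n₀ ≤ n ∧ (u n).length = l}).Finite :=
          Set.Finite.biUnion (Finset.finite_toSet _)
            (fun l hl => (h l (by
              simp only [Finset.coe_range, Set.mem_Iio] at hl; omega)))
        exact (Set.Ici_infinite n₀) (hfin2.subset hsub)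
      obtain ⟨l, hl, hinf⟩ := hfin
      obtain ⟨n₁, hn₁, hln₁⟩ := hinf.nonempty
      have huuK : restrict x l ∈ K := by
        have := hueq n₁ hn₁
        rw [hln₁] at this
        exact this ▸ hu n₁
      refine ⟨restrict x l, huuK, fun i => x (l + i), ?_, (ocat_restrict x l).symm⟩
      intro m
      obtain ⟨n, ⟨hn₀n, hlen_n⟩, hgt⟩ := hinf.exists_gt (l + m)
      have hun : u n = restrict x l := by
        rw [hueq n hn₀n, hlen_n]
      have hk : restrict x n = restrict x l ++ restrict (fun i => x (l + i)) (n - l) := by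
        calc restrict x n = restrict x (l + (n - l)) := by congr 1; omega
          _ = _ := restrict_add x l (n - l)
      have hpw : restrict (fun i => x (l + i)) (n - l) <+: v n := by
        rw [← List.prefix_append_right_inj (restrict x l), ← hk, ← hun, ← heq n]
        exact hpre n
      have hnw : restrict (fun i => x (l + i)) (n - l) ≠ v n := by
        intro he
        apply hne n
        calc restrict x n = restrict x l ++ restrict (fun i => x (l + i)) (n - l) := hk
          _ = restrict x l ++ v n := by rw [he]
          _ = u n ++ v n := by rw [hun]
          _ = t n := (heq n).symm
      have hlt : n - l < (v n).length := by
        have := lt_of_proper hpw hnw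
        rwa [restrict_length] at this
      refine ⟨v n, hv n, (restrict_prefix _ (by omega : m ≤ n - l)).trans hpw, ?_⟩
      intro he
      have := congrArg List.length he
      rw [restrict_length] at this
      omega
  · rintro (hbK | ⟨u, huK, w, hw, rfl⟩)
    · intro n
      obtain ⟨uK, huK, hp, hne⟩ := hbK n
      obtain ⟨v, hvL⟩ := hL
      refine ⟨uK ++ v, ⟨uK, huK, v, hvL, rfl⟩, hp.trans (List.prefix_append _ _), ?_⟩
      intro he
      have h1 := lt_of_proper hp hne
      rw [restrict_length] at h1
      have := congrArg List.length he
      rw [restrict_length, List.length_append] at this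
      omega
    · intro n
      obtain ⟨v, hvL, hp, hne⟩ := hw n
      have h1 : restrict (ocat u w) n <+: u ++ restrict w n := by
        have := restrict_prefix (ocat u w) (by omega : n ≤ u.length + n)
        rwa [restrict_ocat] at this
      refine ⟨u ++ v, ⟨u, huK, v, hvL, rfl⟩,
        h1.trans ((List.prefix_append_right_inj u).mpr hp), ?_⟩
      intro he
      have h2 := lt_of_proper hp hne
      rw [restrict_length] at h2
      have := congrArg List.length he
      rw [restrict_length, List.length_append] at this
      omega
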